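/- arXiv:2210.17263 — 2 statements merged into one kernel-verified Lean document; each statement's English description precedes it below -/
import Mathlib

section
/- There is a constant C depending only on α, d and 𝐝 such that for every real polynomial Q on ℝ^𝐝 of degree at most d, every x ∈ ℝ^𝐝 and all 0 < r ≤ R: ‖Q‖_{B_ρ(x,R)} ≤ C (R/r)^{d α_𝐝} ‖Q‖_{B_ρ(x,r)} and ‖Q‖_{B_ρ(x,r)} ≤ C (r/R)^{α₁} ‖Q‖_{B_ρ(x,R)}. -/
open MeasureTheory Set
open scoped ENNReal NNReal BigOperators

noncomputable section

/-- Euclidean norm on `Fin dd → ℝ`. -/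
def euclNorm {dd : ℕ} (x : Fin dd → ℝ) : ℝ := Real.sqrt (∑ i, (x i) ^ 2)

/-- Anisotropic dilation `δ_r`. -/
def dil {dd : ℕ} (α : Fin dd → ℕ) (r : ℝ) (x : Fin dd → ℝ) : Fin dd → ℝ :=
  fun i => r ^ (α i) * x i

/-- Anisotropic distance function `ρ`. -/
def rho {dd : ℕ} (α : Fin dd → ℕ) (x : Fin dd → ℝ) : ℝ :=
  sInf {r : ℝ | 0 < r ∧ euclNorm (dil α r⁻¹ x) ≤ 1}

/-- `‖Q‖_I = sup_{x,x' ∈ I} |Q(x) - Q(x')|`. -/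
def qnorm {dd : ℕ} (Q : MvPolynomial (Fin dd) ℝ) (I : Set (Fin dd → ℝ)) : ℝ :=
  ⨆ x ∈ I, ⨆ y ∈ I, |MvPolynomial.eval x Q - MvPolynomial.eval y Q|

/-! Write `B` for the unit `ρ`-ball. The ball `B_ρ(x, s)` is the image of `B` under
`z ↦ x - δ_s z`, so `‖Q‖` on it is the oscillation on `B` of `z ↦ Q(x - δ_s z)`. Up to a
constant, this polynomial has the coefficient vector `(s ^ ⟨α, k⟩ c_k)_k`, where
`⟨α, k⟩ = ∑ αᵢ kᵢ` and `c` lists the coefficients of `Q(x - ·)` at the nonconstant monomials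
`X^k` of degree at most `d`. On this finite-dimensional space of coefficient vectors the
oscillation on `B` is a norm, since a polynomial that is constant on the neighbourhood `B` of `0`
is constant; so it is equivalent to the sup norm. Passing from radius `r` to `R` multiplies the
`k`-th coordinate by `(R / r) ^ ⟨α, k⟩`, and `α₁ ≤ ⟨α, k⟩ ≤ d α_𝐝` because `α` is monotone. -/

open MvPolynomial Metric Bornology Filter Topology
open scoped Pointwise

section Anisotropic

variable {n : ℕ} {α : Fin n → ℕ}

theorem continuous_euclNorm : Continuous (euclNorm : (Fin n → ℝ) → ℝ) := by
  unfold euclNorm; fun_prop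

theorem abs_le_euclNorm (x : Fin n → ℝ) (i : Fin n) : |x i| ≤ euclNorm x :=
  Real.abs_le_sqrt (Finset.single_le_sum (f := fun j => x j ^ 2) (fun _ _ => sq_nonneg _)
    (Finset.mem_univ i))

theorem euclNorm_le_euclNorm {x y : Fin n → ℝ} (h : ∀ i, |x i| ≤ |y i|) :
    euclNorm x ≤ euclNorm y :=
  Real.sqrt_le_sqrt (Finset.sum_le_sum fun i _ => sq_le_sq.2 (h i))

theorem dil_dil (s t : ℝ) (z : Fin n → ℝ) : dil α s (dil α t z) = dil α (s * t) z := by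
  ext i; simp only [dil, mul_pow]; ring

theorem dil_one (z : Fin n → ℝ) : dil α 1 z = z := by
  ext i; simp [dil]

def rhoSet (α : Fin n → ℕ) (x : Fin n → ℝ) : Set ℝ :=
  {r | 0 < r ∧ euclNorm (dil α r⁻¹ x) ≤ 1}

theorem rho_eq_sInf (x : Fin n → ℝ) : rho α x = sInf (rhoSet α x) := rfl

theorem rhoSet_nonempty (hα : ∀ i, 0 < α i) (x : Fin n → ℝ) : (rhoSet α x).Nonempty := by
  have hdil : Tendsto (fun r : ℝ => dil α r⁻¹ x) atTop (𝓝 0) :=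
    tendsto_pi_nhds.2 fun i => by
      simpa [dil, zero_pow (hα i).ne'] using
        (tendsto_inv_atTop_zero.pow (α i)).mul_const (x i)
  have hnorm := (continuous_euclNorm.tendsto 0).comp hdil
  rw [show euclNorm (0 : Fin n → ℝ) = 0 by simp [euclNorm]] at hnorm
  exact ((eventually_gt_atTop 0).and (hnorm.eventually (eventually_le_nhds one_pos))).exists

theorem mem_rhoSet_of_le {x : Fin n → ℝ} {r s : ℝ} (hr : r ∈ rhoSet α x) (hrs : r ≤ s) :
    s ∈ rhoSet α x := by
  obtain ⟨hr0, hr1⟩ := hr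
  refine ⟨hr0.trans_le hrs, le_trans (euclNorm_le_euclNorm fun i => ?_) hr1⟩
  simp only [dil, abs_mul, abs_pow, abs_inv]
  gcongr

theorem mem_rhoSet_of_rho_lt (hα : ∀ i, 0 < α i) {x : Fin n → ℝ} {s : ℝ} (h : rho α x < s) :
    s ∈ rhoSet α x := by
  obtain ⟨r, hr, hrs⟩ := exists_lt_of_csInf_lt (rhoSet_nonempty hα x) h
  exact mem_rhoSet_of_le hr hrs.le

theorem abs_le_pow_of_rho_lt (hα : ∀ i, 0 < α i) {x : Fin n → ℝ} {s : ℝ} (h : rho α x < s)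
    (i : Fin n) : |x i| ≤ s ^ α i := by
  obtain ⟨hs, hs1⟩ := mem_rhoSet_of_rho_lt hα h
  have := (abs_le_euclNorm _ i).trans hs1
  rw [dil, abs_mul, abs_pow, abs_inv, abs_of_pos hs, inv_pow, inv_mul_le_iff₀ (by positivity),
    mul_one] at this
  exact this

theorem isBounded_setOf_rho_le (hα : ∀ i, 0 < α i) (s : ℝ) :
    IsBounded {z : Fin n → ℝ | rho α z ≤ s} := by
  refine forall_isBounded_image_eval_iff.1 fun i =>
    (isBounded_Icc (-(s + 1) ^ α i) ((s + 1) ^ α i)).subset ?_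
  rintro _ ⟨z, hz, rfl⟩
  exact abs_le.1 (abs_le_pow_of_rho_lt hα (lt_of_le_of_lt hz (lt_add_one s)) i)

theorem rho_le_one_of_euclNorm_le_one {x : Fin n → ℝ} (h : euclNorm x ≤ 1) : rho α x ≤ 1 :=
  csInf_le ⟨0, fun _ hr => hr.1.le⟩ ⟨one_pos, by rwa [inv_one, dil_one]⟩

theorem setOf_rho_le_one_mem_nhds : {z : Fin n → ℝ | rho α z ≤ 1} ∈ 𝓝 0 := by
  refine mem_of_superset ((isOpen_lt continuous_euclNorm continuous_const).mem_nhds ?_)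
    fun z hz => rho_le_one_of_euclNorm_le_one (le_of_lt hz)
  simp [euclNorm]

theorem rhoSet_dil {t : ℝ} (ht : 0 < t) (x : Fin n → ℝ) :
    rhoSet α (dil α t x) = t • rhoSet α x := by
  ext r
  rw [Set.mem_smul_set_iff_inv_smul_mem₀ ht.ne', smul_eq_mul]
  simp only [rhoSet, Set.mem_ofPred_eq, dil_dil, mul_inv_rev, inv_inv]
  exact and_congr_left' ⟨fun hr => by positivity, fun hr => by simpa [ht.ne'] using mul_pos ht hr⟩

theorem rho_dil {t : ℝ} (ht : 0 < t) (x : Fin n → ℝ) : rho α (dil α t x) = t * rho α x := by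
  rw [rho_eq_sInf, rhoSet_dil ht, Real.sInf_smul_of_nonneg ht.le, smul_eq_mul, rho_eq_sInf]

theorem setOf_rho_sub_le_eq_image (x : Fin n → ℝ) {s : ℝ} (hs : 0 < s) :
    {y | rho α (x - y) ≤ s} = (fun z => x - dil α s z) '' {z | rho α z ≤ 1} := by
  ext y
  constructor
  · intro hy
    refine ⟨dil α s⁻¹ (x - y), ?_, ?_⟩
    · rw [Set.mem_ofPred_eq, rho_dil (inv_pos.2 hs), inv_mul_le_one₀ hs]
      exact hy
    · simp only [dil_dil, mul_inv_cancel₀ hs.ne', dil_one, sub_sub_cancel]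
  · rintro ⟨z, hz, rfl⟩
    rw [Set.mem_ofPred_eq, sub_sub_cancel, rho_dil hs]
    exact mul_le_of_le_one_right hs.le hz

end Anisotropic

theorem Real.biSup_le {ι : Type*} {f : ι → ℝ} {s : Set ι} {M : ℝ} (hM : 0 ≤ M)
    (hf : ∀ y ∈ s, f y ≤ M) : ⨆ y ∈ s, f y ≤ M :=
  Real.iSup_le (fun y => Real.iSup_le (hf y) hM) hM

theorem Real.le_biSup {ι : Type*} {f : ι → ℝ} {s : Set ι} {M : ℝ} (hM : 0 ≤ M)
    (hf : ∀ y ∈ s, f y ≤ M) {x : ι} (hx : x ∈ s) : f x ≤ ⨆ y ∈ s, f y :=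
  le_ciSup_of_le ⟨M, forall_mem_range.2 fun y => Real.iSup_le (hf y) hM⟩ x (by rw [ciSup_pos hx])

section Oscillation

variable {n : ℕ}

theorem qnorm_le {Q : MvPolynomial (Fin n) ℝ} {I : Set (Fin n → ℝ)} {M : ℝ} (hM : 0 ≤ M)
    (h : ∀ x ∈ I, ∀ y ∈ I, |eval x Q - eval y Q| ≤ M) : qnorm Q I ≤ M :=
  Real.biSup_le hM fun x hx => Real.biSup_le hM (h x hx)

/-- This also holds when `Q` is unbounded on `I`: then both sides are the junk value `0`. -/
theorem qnorm_eq_diam (Q : MvPolynomial (Fin n) ℝ) (I : Set (Fin n → ℝ)) :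
    qnorm Q I = diam ((fun z => eval z Q) '' I) := by
  by_cases hS : IsBounded ((fun z => eval z Q) '' I)
  · have hle : ∀ x ∈ I, ∀ y ∈ I, |eval x Q - eval y Q| ≤ diam ((fun z => eval z Q) '' I) :=
      fun x hx y hy => dist_le_diam_of_mem hS (mem_image_of_mem _ hx) (mem_image_of_mem _ hy)
    refine le_antisymm (qnorm_le diam_nonneg hle) (diam_le_of_forall_dist_le ?_ ?_)
    · exact Real.iSup_nonneg fun _ => Real.iSup_nonneg fun _ => Real.iSup_nonneg fun _ =>
        Real.iSup_nonneg fun _ => abs_nonneg _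
    · rintro _ ⟨x, hx, rfl⟩ _ ⟨y, hy, rfl⟩
      exact (Real.le_biSup diam_nonneg (hle x hx) hy).trans
        (Real.le_biSup diam_nonneg (fun x hx => Real.biSup_le diam_nonneg (hle x hx)) hx)
  · have hzero : ∀ x ∈ I, ⨆ y ∈ I, |eval x Q - eval y Q| = 0 := fun x _ =>
      Real.iSup_of_not_bddAbove fun ⟨M, hM⟩ => hS <| isBounded_closedBall.subset <| by
        rintro _ ⟨y, hy, rfl⟩
        rw [mem_closedBall, Real.dist_eq, abs_sub_comm]
        simpa [ciSup_pos hy] using hM (mem_range_self y)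
    rw [diam_eq_zero_of_unbounded hS, qnorm]
    exact (iSup_congr fun x => iSup_congr fun hx => hzero x hx).trans (by simp)

theorem qnorm_nonneg (Q : MvPolynomial (Fin n) ℝ) (I : Set (Fin n → ℝ)) : 0 ≤ qnorm Q I :=
  qnorm_eq_diam Q I ▸ diam_nonneg

theorem isBounded_image_eval {I : Set (Fin n → ℝ)} (hI : IsBounded I)
    (P : MvPolynomial (Fin n) ℝ) : IsBounded ((fun z => eval z P) '' I) :=
  (hI.isCompact_closure.image (continuous_eval P)).isBounded.subset (image_mono subset_closure)

theorem abs_sub_le_qnorm {I : Set (Fin n → ℝ)} (hI : IsBounded I) (P : MvPolynomial (Fin n) ℝ)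
    {x y : Fin n → ℝ} (hx : x ∈ I) (hy : y ∈ I) : |eval x P - eval y P| ≤ qnorm P I := by
  rw [qnorm_eq_diam]
  exact dist_le_diam_of_mem (isBounded_image_eval hI P) (mem_image_of_mem _ hx)
    (mem_image_of_mem _ hy)

theorem qnorm_image {Q Q' : MvPolynomial (Fin n) ℝ} {g : (Fin n → ℝ) → Fin n → ℝ}
    {J : Set (Fin n → ℝ)} (h : ∀ z ∈ J, eval (g z) Q = eval z Q') :
    qnorm Q (g '' J) = qnorm Q' J := by
  rw [qnorm_eq_diam, qnorm_eq_diam, image_image, image_congr h]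

theorem qnorm_C_add (a : ℝ) (P : MvPolynomial (Fin n) ℝ) (I : Set (Fin n → ℝ)) :
    qnorm (C a + P) I = qnorm P I := by
  rw [qnorm_eq_diam, qnorm_eq_diam,
    ← (isometry_add_left a).diam_image ((fun z => eval z P) '' I), image_image]
  simp only [map_add, eval_C]

def oscSeminorm {I : Set (Fin n → ℝ)} (hI : IsBounded I) :
    Seminorm ℝ (MvPolynomial (Fin n) ℝ) :=
  Seminorm.ofSMulLE (qnorm · I) (by simp [qnorm])
    (fun P P' => qnorm_le (add_nonneg (qnorm_nonneg P I) (qnorm_nonneg P' I)) fun x hx y hy => by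
      rw [map_add, map_add, add_sub_add_comm]
      exact (abs_add_le _ _).trans
        (add_le_add (abs_sub_le_qnorm hI P hx hy) (abs_sub_le_qnorm hI P' hx hy)))
    (fun a P => qnorm_le (mul_nonneg (norm_nonneg a) (qnorm_nonneg P I)) fun x hx y hy => by
      rw [smul_eval, smul_eval, ← mul_sub, abs_mul, ← Real.norm_eq_abs]
      exact mul_le_mul_of_nonneg_left (abs_sub_le_qnorm hI P hx hy) (norm_nonneg a))

theorem eq_C_of_qnorm_eq_zero {P : MvPolynomial (Fin n) ℝ} {I : Set (Fin n → ℝ)}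
    (hI : IsBounded I) (h0 : I ∈ 𝓝 0) (h : qnorm P I = 0) : P = C (eval 0 P) := by
  have hconst : ∀ z ∈ I, eval z P = eval 0 P := fun z hz =>
    sub_eq_zero.1 (abs_nonpos_iff.1 (h ▸ abs_sub_le_qnorm hI P hz (mem_of_mem_nhds h0)))
  obtain ⟨ε, hε, hball⟩ := nhds_basis_closedBall.mem_iff.1 h0
  refine funext_set (fun _ => closedBall 0 ε) (fun _ => ?_) fun x hx => ?_
  · rw [Real.closedBall_eq_Icc]
    exact Icc_infinite (by linarith)
  · rw [eval_C, hconst x (hball (by rwa [closedBall_pi _ hε.le]))]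

end Oscillation

namespace Seminorm

theorem exists_le_mul_norm_pi {ι : Type*} [Fintype ι] (p : Seminorm ℝ (ι → ℝ)) :
    ∃ b > 0, ∀ c, p c ≤ b * ‖c‖ := by
  classical
  have hsum : 0 ≤ ∑ i, p (Pi.single i 1) := Finset.sum_nonneg fun i _ => apply_nonneg p _
  refine ⟨∑ i, p (Pi.single i 1) + 1, by positivity, fun c => ?_⟩
  calc p c = p (∑ i, c i • Pi.single i 1) := by rw [← pi_eq_sum_univ' c]
    _ ≤ ∑ i, p (c i • Pi.single i 1) :=
      Finset.le_sum_of_subadditive p (map_zero p).le (map_add_le_add p) _ _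
    _ ≤ ∑ i, ‖c‖ * p (Pi.single i 1) := Finset.sum_le_sum fun i _ => by
      rw [map_smul_eq_mul]
      exact mul_le_mul_of_nonneg_right (norm_le_pi_norm c i) (apply_nonneg p _)
    _ ≤ (∑ i, p (Pi.single i 1) + 1) * ‖c‖ := by
      rw [← Finset.mul_sum]; nlinarith [norm_nonneg c]

theorem continuous_pi {ι : Type*} [Fintype ι] (p : Seminorm ℝ (ι → ℝ)) : Continuous p := by
  obtain ⟨b, hb, hp⟩ := p.exists_le_mul_norm_pi
  refine (LipschitzWith.of_dist_le_mul (K := ⟨b, hb.le⟩) fun c c' => ?_).continuous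
  rw [Real.dist_eq, dist_eq_norm]
  exact (abs_sub_map_le_sub p c c').trans (hp _)

theorem exists_pos_mul_norm_le {E : Type*} [NormedAddCommGroup E] [NormedSpace ℝ E]
    [ProperSpace E] (p : Seminorm ℝ E) (hp : Continuous p) (hpos : ∀ x ≠ 0, 0 < p x) :
    ∃ a > 0, ∀ x, a * ‖x‖ ≤ p x := by
  obtain ⟨a, ha, hmin⟩ := (isCompact_sphere (0 : E) 1).exists_forall_le' hp.continuousOn
    fun x hx => hpos x (ne_zero_of_mem_unit_sphere ⟨x, hx⟩)
  refine ⟨a, ha, fun x => ?_⟩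
  rcases eq_or_ne x 0 with rfl | hx
  · simp
  · have := hmin (‖x‖⁻¹ • x) (by simp [norm_smul, hx])
    rwa [map_smul_eq_mul, norm_inv, norm_norm, le_inv_mul_iff₀ (norm_pos_iff.2 hx),
      mul_comm] at this

end Seminorm

theorem MvPolynomial.totalDegree_bind₁_le {σ τ R : Type*} [CommSemiring R]
    {f : σ → MvPolynomial τ R} {N : ℕ} (hf : ∀ i, (f i).totalDegree ≤ N) (p : MvPolynomial σ R) :
    (bind₁ f p).totalDegree ≤ N * p.totalDegree := by
  conv_lhs => rw [← p.support_sum_monomial_coeff]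
  rw [map_sum]
  refine (totalDegree_finsetSum _ _).trans (Finset.sup_le fun k hk => ?_)
  rw [bind₁_monomial]
  refine (totalDegree_mul _ _).trans ?_
  rw [totalDegree_C, zero_add]
  refine (totalDegree_finsetProd _ _).trans ?_
  calc ∑ i ∈ k.support, (f i ^ k i).totalDegree ≤ ∑ i ∈ k.support, N * k i :=
        Finset.sum_le_sum fun i _ =>
          (totalDegree_pow _ _).trans (by rw [mul_comm]; gcongr; exact hf i)
    _ = N * ∑ i ∈ k.support, k i := Finset.mul_sum _ _ _ |>.symm
    _ ≤ N * p.totalDegree := Nat.mul_le_mul_left _ (le_totalDegree hk)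

section Coefficients

variable {n d : ℕ}

def nonconstExps (n d : ℕ) : Finset (Fin n →₀ ℕ) :=
  (Finsupp.finite_of_degree_le d).toFinset.erase 0

theorem mem_nonconstExps {k : Fin n →₀ ℕ} : k ∈ nonconstExps n d ↔ k ≠ 0 ∧ k.degree ≤ d := by
  simp [nonconstExps]

def ofCoeffs (n d : ℕ) : (nonconstExps n d → ℝ) →ₗ[ℝ] MvPolynomial (Fin n) ℝ :=
  Fintype.linearCombination ℝ fun k => monomial k.1 1

theorem coeff_ofCoeffs (c : nonconstExps n d → ℝ) (j : Fin n →₀ ℕ) :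
    coeff j (ofCoeffs n d c) = if h : j ∈ nonconstExps n d then c ⟨j, h⟩ else 0 := by
  classical
  simp only [ofCoeffs, Fintype.linearCombination_apply, coeff_sum, coeff_smul, coeff_monomial,
    smul_eq_mul, mul_ite, mul_one, mul_zero]
  split_ifs with h
  · rw [Finset.sum_eq_single ⟨j, h⟩ (fun k _ hk => if_neg fun e => hk (Subtype.ext e))
      (by simp), if_pos rfl]
  · exact Finset.sum_eq_zero fun k _ => if_neg fun e : k.1 = j => h (e ▸ k.2)

theorem eq_C_add_ofCoeffs {P : MvPolynomial (Fin n) ℝ} (hP : P.totalDegree ≤ d) :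
    P = C (coeff 0 P) + ofCoeffs n d (fun k => coeff k.1 P) := by
  ext j
  rw [coeff_add, coeff_C, coeff_ofCoeffs]
  rcases eq_or_ne j 0 with rfl | hj
  · simp [mem_nonconstExps]
  · rw [if_neg hj.symm, zero_add]
    split_ifs with h
    · rfl
    · refine coeff_eq_zero_of_totalDegree_lt (hP.trans_lt ?_)
      simpa [mem_nonconstExps, hj, Finsupp.degree_apply] using h

def dilCoeffs (α : Fin n → ℕ) (t : ℝ) (c : nonconstExps n d → ℝ) : nonconstExps n d → ℝ :=
  fun k => t ^ Finsupp.weight α k.1 * c k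

theorem dilCoeffs_mul (α : Fin n → ℕ) (s t : ℝ) (c : nonconstExps n d → ℝ) :
    dilCoeffs α (s * t) c = dilCoeffs α s (dilCoeffs α t c) := by
  ext k; simp only [dilCoeffs, mul_pow, mul_assoc]

theorem eval_dil_monomial (α : Fin n → ℕ) (t : ℝ) (z : Fin n → ℝ) (k : Fin n →₀ ℕ) (a : ℝ) :
    eval (dil α t z) (monomial k a) = t ^ Finsupp.weight α k * eval z (monomial k a) := by
  simp only [eval_monomial, dil, mul_pow, ← pow_mul, Finsupp.prod, Finset.prod_mul_distrib,
    Finset.prod_pow_eq_pow_sum, Finsupp.weight_apply, Finsupp.sum, smul_eq_mul, mul_comm]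
  ring

theorem eval_dil_ofCoeffs (α : Fin n → ℕ) (t : ℝ) (z : Fin n → ℝ) (c : nonconstExps n d → ℝ) :
    eval (dil α t z) (ofCoeffs n d c) = eval z (ofCoeffs n d (dilCoeffs α t c)) := by
  simp only [ofCoeffs, Fintype.linearCombination_apply, map_sum, smul_eval, eval_dil_monomial,
    dilCoeffs]
  exact Finset.sum_congr rfl fun k _ => by ring

theorem norm_dilCoeffs_le_of_le_one {α : Fin n → ℕ} {μ : ℕ}
    (hμ : ∀ k ∈ nonconstExps n d, μ ≤ Finsupp.weight α k) {t : ℝ} (ht0 : 0 ≤ t) (ht1 : t ≤ 1)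
    (c : nonconstExps n d → ℝ) : ‖dilCoeffs α t c‖ ≤ t ^ μ * ‖c‖ :=
  (pi_norm_le_iff_of_nonneg (by positivity)).2 fun k => by
    rw [dilCoeffs, norm_mul, norm_pow, Real.norm_of_nonneg ht0]
    exact mul_le_mul (pow_le_pow_of_le_one ht0 ht1 (hμ k.1 k.2)) (norm_le_pi_norm c k)
      (norm_nonneg _) (by positivity)

theorem norm_dilCoeffs_le_of_one_le {α : Fin n → ℕ} {D : ℕ}
    (hD : ∀ k ∈ nonconstExps n d, Finsupp.weight α k ≤ D) {t : ℝ} (ht : 1 ≤ t)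
    (c : nonconstExps n d → ℝ) : ‖dilCoeffs α t c‖ ≤ t ^ D * ‖c‖ :=
  (pi_norm_le_iff_of_nonneg (by positivity)).2 fun k => by
    rw [dilCoeffs, norm_mul, norm_pow, Real.norm_of_nonneg (by linarith)]
    exact mul_le_mul (pow_le_pow_right₀ ht (hD k.1 k.2)) (norm_le_pi_norm c k)
      (norm_nonneg _) (by positivity)

theorem le_weight_of_mem_nonconstExps {m : ℕ} {α : Fin (m + 1) → ℕ} (hmono : Monotone α)
    {k : Fin (m + 1) →₀ ℕ} (hk : k ∈ nonconstExps (m + 1) d) : α 0 ≤ Finsupp.weight α k := by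
  obtain ⟨i, hi⟩ := Finsupp.ne_iff.1 (mem_nonconstExps.1 hk).1
  exact (hmono (Fin.zero_le i)).trans (Finsupp.le_weight_of_ne_zero' α hi)

theorem weight_le_of_mem_nonconstExps {m : ℕ} {α : Fin (m + 1) → ℕ} (hmono : Monotone α)
    {k : Fin (m + 1) →₀ ℕ} (hk : k ∈ nonconstExps (m + 1) d) :
    Finsupp.weight α k ≤ d * α (Fin.last m) :=
  calc Finsupp.weight α k = ∑ i, k i * α i := Finsupp.weight_eq_sum _ _
    _ ≤ ∑ i, k i * α (Fin.last m) := by gcongr with i; exact hmono (Fin.le_last i)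
    _ = k.degree * α (Fin.last m) := by rw [← Finset.sum_mul, Finsupp.degree_eq_sum]
    _ ≤ d * α (Fin.last m) := by gcongr; exact (mem_nonconstExps.1 hk).2

theorem qnorm_ofCoeffs_pos {I : Set (Fin n → ℝ)} (hI : IsBounded I) (h0 : I ∈ 𝓝 0)
    {c : nonconstExps n d → ℝ} (hc : c ≠ 0) : 0 < qnorm (ofCoeffs n d c) I := by
  refine (qnorm_nonneg _ I).lt_of_ne fun h => hc ?_
  have hC := eq_C_of_qnorm_eq_zero hI h0 h.symm
  ext k
  have := coeff_ofCoeffs c k.1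
  rw [hC, coeff_C, if_neg (mem_nonconstExps.1 k.2).1.symm, dif_pos k.2] at this
  exact this.symm

theorem exists_norm_equiv_qnorm_ofCoeffs {I : Set (Fin n → ℝ)} (hI : IsBounded I) (h0 : I ∈ 𝓝 0) :
    ∃ a > 0, ∃ b > 0, ∀ c : nonconstExps n d → ℝ,
      a * ‖c‖ ≤ qnorm (ofCoeffs n d c) I ∧ qnorm (ofCoeffs n d c) I ≤ b * ‖c‖ := by
  set p := (oscSeminorm hI).comp (ofCoeffs n d)
  obtain ⟨a, ha, hpa⟩ := p.exists_pos_mul_norm_le p.continuous_pi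
    fun c hc => qnorm_ofCoeffs_pos hI h0 hc
  obtain ⟨b, hb, hpb⟩ := p.exists_le_mul_norm_pi
  exact ⟨a, ha, b, hb, fun c => ⟨hpa c, hpb c⟩⟩

theorem qnorm_setOf_rho_sub_le {α : Fin n → ℕ} {Q : MvPolynomial (Fin n) ℝ}
    (hQ : Q.totalDegree ≤ d) (x : Fin n → ℝ) {s : ℝ} (hs : 0 < s) :
    qnorm Q {y | rho α (x - y) ≤ s} = qnorm (ofCoeffs n d (dilCoeffs α s
      fun k => coeff k.1 (bind₁ (fun i => C (x i) - X i) Q))) {z | rho α z ≤ 1} := by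
  set P := bind₁ (fun i => C (x i) - X i) Q
  have hP : P.totalDegree ≤ d := (totalDegree_bind₁_le (N := 1)
    (fun i => (totalDegree_sub _ _).trans (by simp)) Q).trans (by rwa [one_mul])
  rw [setOf_rho_sub_le_eq_image x hs, ← qnorm_C_add (coeff 0 P) (ofCoeffs n d _)]
  refine qnorm_image fun z _ => ?_
  have hdec := congrArg (eval (dil α s z)) (eq_C_add_ofCoeffs hP)
  rw [map_add, eval_C, eval_dil_ofCoeffs] at hdec
  rw [map_add, eval_C, ← hdec]
  have hsub : x - dil α s z = fun i => eval (dil α s z) (C (x i) - X i) := by ext i; simp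
  rw [hsub]
  exact (eval₂Hom_bind₁ _ _ _ _).symm

end Coefficients

theorem le_div_mul_of_norm_equiv {E : Type*} [SeminormedAddCommGroup E] {f : E → ℝ} {a b : ℝ}
    (ha : 0 < a) (hb : 0 ≤ b) (hf : ∀ u, a * ‖u‖ ≤ f u ∧ f u ≤ b * ‖u‖) {u v : E} {l : ℝ}
    (hl : 0 ≤ l) (huv : ‖v‖ ≤ l * ‖u‖) : f v ≤ b / a * l * f u :=
  calc f v ≤ b * ‖v‖ := (hf v).2
    _ ≤ b * (l * (f u / a)) := by
      gcongr
      exact huv.trans (by gcongr; rw [le_div_iff₀ ha, mul_comm]; exact (hf u).1)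
    _ = b / a * l * f u := by ring

theorem statement6 (m d : ℕ) (α : Fin (m + 1) → ℕ) (hα : ∀ i, 0 < α i)
    (hmono : Monotone α) :
    ∃ C : ℝ, 0 < C ∧
      ∀ (Q : MvPolynomial (Fin (m + 1)) ℝ), Q.totalDegree ≤ d →
      ∀ (x : Fin (m + 1) → ℝ) (r R : ℝ), 0 < r → r ≤ R →
        qnorm Q {y | rho α (x - y) ≤ R} ≤
            C * (R / r) ^ (d * α (Fin.last m)) * qnorm Q {y | rho α (x - y) ≤ r} ∧
        qnorm Q {y | rho α (x - y) ≤ r} ≤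
            C * (r / R) ^ (α 0) * qnorm Q {y | rho α (x - y) ≤ R} := by
  obtain ⟨a, ha, b, hb, hequiv⟩ := exists_norm_equiv_qnorm_ofCoeffs (d := d)
    (isBounded_setOf_rho_le hα 1) (setOf_rho_le_one_mem_nhds (α := α))
  refine ⟨b / a, div_pos hb ha, fun Q hQ x r R hr hrR => ?_⟩
  have hR : 0 < R := hr.trans_le hrR
  set c := fun k : nonconstExps (m + 1) d => coeff k.1 (bind₁ (fun i => C (x i) - X i) Q)
  have hcR : dilCoeffs α R c = dilCoeffs α (R / r) (dilCoeffs α r c) := by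
    rw [← dilCoeffs_mul, div_mul_cancel₀ R hr.ne']
  have hcr : dilCoeffs α r c = dilCoeffs α (r / R) (dilCoeffs α R c) := by
    rw [← dilCoeffs_mul, div_mul_cancel₀ r hR.ne']
  rw [qnorm_setOf_rho_sub_le hQ x hR, qnorm_setOf_rho_sub_le hQ x hr]
  constructor
  · refine le_div_mul_of_norm_equiv ha hb.le hequiv (by positivity) ?_
    rw [hcR]
    exact norm_dilCoeffs_le_of_one_le (fun k hk => weight_le_of_mem_nonconstExps hmono hk)
      ((one_le_div hr).2 hrR) _
  · refine le_div_mul_of_norm_equiv ha hb.le hequiv (by positivity) ?_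
    rw [hcr]
    exact norm_dilCoeffs_le_of_le_one (fun k hk => le_weight_of_mem_nonconstExps hmono hk)
      (by positivity) ((div_le_one hR).2 hrR) _

end
end

section
/- Fix λ > 10e. There exists a set E₁ ⊂ 𝕋^𝐝 which is a disjoint union of D-adic cubes, such that: (1) |E₁| ≤ C λ^{−2}; and (2) setting 𝔓_good = {𝔭 ∈ 𝔓 : I_𝔭 ⊄ E₁}, for every n ≥ 1 the set 𝔐_n of tiles in 𝔓_good that are maximal with respect to ≤ among those satisfying |Ē(𝔭)|/|I_𝔭| ≥ 2^{−n} satisfies ‖Σ_{𝔭∈𝔐_n} 1_{I_𝔭}‖_{L^∞(𝕋^𝐝)} ≤ C 2^n log(n+1) log(λ). Here C depends only on α, 𝐝 and d. -/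
open MeasureTheory Set
open scoped ENNReal NNReal BigOperators

noncomputable section

/-- An anisotropic `D`-adic cube, given by its scale `s` and position `k`. -/
structure DCube (dd : ℕ) where
  s : ℤ
  k : Fin dd → ℤ

/-- The cube `x + δ_{D^s}([0,1)^dd)` with `x = δ_{D^s}(k)`, as a subset of `ℝ^dd`. -/
def DCube.toSet {dd : ℕ} (α : Fin dd → ℕ) (D : ℕ) (J : DCube dd) : Set (Fin dd → ℝ) :=
  {x | ∀ i, (D : ℝ) ^ (J.s * (α i : ℤ)) * J.k i ≤ x i ∧
            x i < (D : ℝ) ^ (J.s * (α i : ℤ)) * (J.k i + 1)}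

/-- Membership in the grid `𝒟`: nonpositive scale and base point in `[0,1)^dd`. -/
def DCube.valid {dd : ℕ} (α : Fin dd → ℕ) (D : ℕ) (J : DCube dd) : Prop :=
  J.s ≤ 0 ∧ ∀ i, 0 ≤ J.k i ∧ (D : ℝ) ^ (J.s * (α i : ℤ)) * J.k i < 1

/-- The space `𝒬` of real polynomials of degree at most `d` without constant term. -/
def QSpace (dd d : ℕ) : Set (MvPolynomial (Fin dd) ℝ) :=
  {Q | Q.totalDegree ≤ d ∧ MvPolynomial.coeff 0 Q = 0}

/-- `B_I(Q, r)`. -/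
def qball {dd : ℕ} (d : ℕ) (I : Set (Fin dd → ℝ)) (Q : MvPolynomial (Fin dd) ℝ) (r : ℝ) :
    Set (MvPolynomial (Fin dd) ℝ) :=
  {Q' ∈ QSpace dd d | qnorm (Q' - Q) I ≤ r}

/-- A tile: a `D`-adic cube together with an uncertainty region and a central polynomial. -/
structure Tile (dd : ℕ) where
  I : DCube dd
  Q : Set (MvPolynomial (Fin dd) ℝ)
  c : MvPolynomial (Fin dd) ℝ

/-- The defining conditions of a tile. -/
def IsTile {dd : ℕ} (α : Fin dd → ℕ) (D d : ℕ) (s_min s_max : ℤ) (p : Tile dd) : Prop :=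
  p.I.valid α D ∧ s_min ≤ p.I.s ∧ p.I.s ≤ s_max ∧ p.c ∈ p.Q ∧
  qball d (p.I.toSet α D) p.c 0.2 ⊆ p.Q ∧ p.Q ⊆ qball d (p.I.toSet α D) p.c 1

/-- The order `𝔭 ≤ 𝔭'` on tiles. -/
def Tile.le {dd : ℕ} (α : Fin dd → ℕ) (D : ℕ) (p p' : Tile dd) : Prop :=
  p.I.toSet α D ⊆ p'.I.toSet α D ∧ p'.Q ⊆ p.Q

/-- The strict order `𝔭 < 𝔭'` on tiles. -/
def Tile.lt {dd : ℕ} (α : Fin dd → ℕ) (D : ℕ) (p p' : Tile dd) : Prop :=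
  Tile.le α D p p' ∧ p.I.toSet α D ≠ p'.I.toSet α D

/-- The standing hypotheses on the collection `𝔓` of all tiles. -/
def GoodCollection {dd : ℕ} (α : Fin dd → ℕ) (D d : ℕ) (s_min s_max : ℤ)
    (𝔓 : Set (Tile dd)) : Prop :=
  (∀ p ∈ 𝔓, IsTile α D d s_min s_max p) ∧
  (∀ I : DCube dd, I.valid α D → s_min ≤ I.s → I.s ≤ s_max →
    ∀ Q ∈ QSpace dd d, ∃ p ∈ 𝔓, p.I = I ∧ Q ∈ p.Q) ∧
  (∀ p ∈ 𝔓, ∀ p' ∈ 𝔓, p.I = p'.I → p ≠ p' → p.Q ∩ p'.Q = ∅) ∧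
  (∀ p ∈ 𝔓, ∀ p' ∈ 𝔓, p.I.toSet α D ⊆ p'.I.toSet α D → p.Q ∩ p'.Q = ∅ ∨ p'.Q ⊆ p.Q)

/-- `Ē(𝔭) = {x ∈ I_𝔭 : Q_x ∈ 𝒬(𝔭)}`. -/
def Ebar {dd : ℕ} (α : Fin dd → ℕ) (D : ℕ)
    (Qx : (Fin dd → ℝ) → MvPolynomial (Fin dd) ℝ) (p : Tile dd) : Set (Fin dd → ℝ) :=
  {x | x ∈ p.I.toSet α D ∧ Qx x ∈ p.Q}

/-- `𝔓_good`: tiles whose spatial cube is not contained in the exceptional set. -/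
def goodTiles {dd : ℕ} (α : Fin dd → ℕ) (D : ℕ) (𝔓 : Set (Tile dd))
    (E₁ : Set (Fin dd → ℝ)) : Set (Tile dd) :=
  {p ∈ 𝔓 | ¬ p.I.toSet α D ⊆ E₁}

/-- Tiles in `𝔓_good` with `|Ē(𝔭)|/|I_𝔭| ≥ 2^{-n}`. -/
def denseTiles {dd : ℕ} (α : Fin dd → ℕ) (D : ℕ)
    (Qx : (Fin dd → ℝ) → MvPolynomial (Fin dd) ℝ) (𝔓 : Set (Tile dd))
    (E₁ : Set (Fin dd → ℝ)) (n : ℕ) : Set (Tile dd) :=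
  {p ∈ goodTiles α D 𝔓 E₁ |
    volume (p.I.toSet α D) ≤ 2 ^ n * volume (Ebar α D Qx p)}

/-- `𝔐_n`: the maximal tiles with respect to `≤` among `denseTiles`. -/
def MaxTiles {dd : ℕ} (α : Fin dd → ℕ) (D : ℕ)
    (Qx : (Fin dd → ℝ) → MvPolynomial (Fin dd) ℝ) (𝔓 : Set (Tile dd))
    (E₁ : Set (Fin dd → ℝ)) (n : ℕ) : Set (Tile dd) :=
  {p ∈ denseTiles α D Qx 𝔓 E₁ n |
    ∀ q ∈ denseTiles α D Qx 𝔓 E₁ n, Tile.le α D p q → p = q}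

/-- `[0,1)^dd`, the region containing the `D`-adic grid. -/
def unitCube (dd : ℕ) : Set (Fin dd → ℝ) := {x | ∀ i, 0 ≤ x i ∧ x i < 1}


/-!
For each `n`, the maximal tiles of density at least `2⁻¹ ^ n` (no exceptional set removed) have
pairwise disjoint sets `Ebar`, hence satisfy the Carleson packing condition
`∑_{I_𝔭 ⊆ J} |I_𝔭| ≤ 2 ^ n |J|`. By the John–Nirenberg inequality their counting function
exceeds `k * 2 ^ (n + 1)` only on a set of measure `≤ 2⁻¹ ^ k`; with `2 ^ k ≈ (λ (n + 1)) ^ 2`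
these level sets add up to `E₁`, of measure `≲ λ⁻²`, a union of cubes of the finest scale since
the counting functions are constant on those. A tile of `𝔐_n` lies below one of these maximal
tiles, and tiles of `𝔐_n` through a common point lie below distinct ones; at a point of the
smallest of their cubes outside `E₁` this bounds their number by
`k * 2 ^ (n + 1) ≲ 2 ^ n log (n + 1) log λ`.
-/

namespace DCube

variable {dd : ℕ} {α : Fin dd → ℕ} {D : ℕ}

def side (α : Fin dd → ℕ) (D : ℕ) (J : DCube dd) (i : Fin dd) : ℝ :=
  (D : ℝ) ^ (J.s * (α i : ℤ))

lemma side_pos (hD : 0 < D) (J : DCube dd) (i : Fin dd) : 0 < J.side α D i :=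
  zpow_pos (Nat.cast_pos.2 hD) _

lemma mem_toSet_iff (hD : 0 < D) {J : DCube dd} {x : Fin dd → ℝ} :
    x ∈ J.toSet α D ↔ ∀ i, ⌊x i / J.side α D i⌋ = J.k i := by
  refine forall_congr' fun i => ?_
  rw [Int.floor_eq_iff, le_div_iff₀ (side_pos hD J i), div_lt_iff₀ (side_pos hD J i),
    mul_comm, mul_comm (_ + 1 : ℝ)]
  rfl

lemma side_eq_mul_of_s_le (hD : 0 < D) {J J' : DCube dd} (hs : J.s ≤ J'.s) (i : Fin dd) :
    ∃ t : ℕ, J'.side α D i = J.side α D i * t := by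
  obtain ⟨m, hm⟩ :=
    Int.eq_ofNat_of_zero_le (mul_nonneg (sub_nonneg.2 hs) (Int.natCast_nonneg (α i)))
  refine ⟨D ^ m, ?_⟩
  rw [side, side, Nat.cast_pow, ← zpow_natCast, ← hm, ← zpow_add₀ (Nat.cast_ne_zero.2 hD.ne')]
  ring_nf

lemma toSet_subset_of_mem (hD : 0 < D) {J J' : DCube dd} (hs : J.s ≤ J'.s) {x : Fin dd → ℝ}
    (hx : x ∈ J.toSet α D) (hx' : x ∈ J'.toSet α D) : J.toSet α D ⊆ J'.toSet α D := by
  intro y hy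
  rw [mem_toSet_iff hD] at hx hx' hy ⊢
  intro i
  obtain ⟨t, ht⟩ := side_eq_mul_of_s_le (α := α) hD hs i
  rw [← hx' i, ht, ← div_div, ← div_div, Int.floor_div_natCast, Int.floor_div_natCast, hx i, hy i]

lemma eq_of_mem_of_mem (hD : 0 < D) {J J' : DCube dd} (hs : J.s = J'.s) {x : Fin dd → ℝ}
    (hx : x ∈ J.toSet α D) (hx' : x ∈ J'.toSet α D) : J = J' := by
  obtain ⟨s, k⟩ := J
  obtain ⟨s', k'⟩ := J'
  obtain rfl : s = s' := hs
  rw [mem_toSet_iff hD] at hx hx'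
  simp only [mk.injEq, true_and]
  exact funext fun i => (hx i).symm.trans (hx' i)

def corner (α : Fin dd → ℕ) (D : ℕ) (J : DCube dd) : Fin dd → ℝ :=
  fun i => J.side α D i * J.k i

lemma corner_mem (hD : 0 < D) (J : DCube dd) : J.corner α D ∈ J.toSet α D := by
  rw [mem_toSet_iff hD]
  intro i
  rw [corner, mul_div_cancel_left₀ _ (side_pos hD J i).ne', Int.floor_intCast]

lemma toSet_mk_zero : (⟨0, 0⟩ : DCube dd).toSet α D = unitCube dd := by
  ext x
  simp [DCube.toSet, unitCube]

lemma toSet_subset_unitCube (hD : 0 < D) {J : DCube dd} (hJ : J.valid α D) :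
    J.toSet α D ⊆ unitCube dd := by
  have hcorner : J.corner α D ∈ unitCube dd := fun i =>
    ⟨mul_nonneg (side_pos hD J i).le (Int.cast_nonneg (hJ.2 i).1), (hJ.2 i).2⟩
  rw [← toSet_mk_zero (α := α) (D := D)] at hcorner ⊢
  exact toSet_subset_of_mem hD hJ.1 (corner_mem hD J) hcorner

lemma exists_mem_toSet (hD : 0 < D) {s : ℤ} (hs : s ≤ 0) {x : Fin dd → ℝ}
    (hx : x ∈ unitCube dd) : ∃ J : DCube dd, J.s = s ∧ J.valid α D ∧ x ∈ J.toSet α D := by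
  set J : DCube dd := ⟨s, fun i => ⌊x i / (D : ℝ) ^ (s * (α i : ℤ))⌋⟩
  have hxJ : x ∈ J.toSet α D := (mem_toSet_iff hD).2 fun i => rfl
  refine ⟨J, rfl, ⟨hs, fun i => ⟨?_, (hxJ i).1.trans_lt (hx i).2⟩⟩, hxJ⟩
  exact Int.floor_nonneg.2 (div_nonneg (hx i).1 (side_pos hD J i).le)

lemma finite_setOf_valid (hD : 0 < D) (s_min : ℤ) :
    {J : DCube dd | J.valid α D ∧ s_min ≤ J.s}.Finite := by
  set B : Fin dd → ℤ := fun i => ⌈1 / (D : ℝ) ^ (s_min * (α i : ℤ))⌉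
  have hsub : {J : DCube dd | J.valid α D ∧ s_min ≤ J.s} ⊆
      (fun p : ℤ × (Fin dd → ℤ) => DCube.mk p.1 p.2) ''
        (Icc s_min 0 ×ˢ pi univ fun i => Icc 0 (B i)) := by
    rintro J ⟨hJ, hs⟩
    refine ⟨(J.s, J.k), ⟨⟨hs, hJ.1⟩, fun i _ => ⟨(hJ.2 i).1, ?_⟩⟩, rfl⟩
    have hside : (D : ℝ) ^ (s_min * (α i : ℤ)) ≤ J.side α D i :=
      zpow_le_zpow_right₀ (Nat.one_le_cast.2 hD)
        (mul_le_mul_of_nonneg_right hs (Int.natCast_nonneg _))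
    have hpos : (0 : ℝ) < (D : ℝ) ^ (s_min * (α i : ℤ)) := zpow_pos (Nat.cast_pos.2 hD) _
    have hk : (J.k i : ℝ) ≤ 1 / (D : ℝ) ^ (s_min * (α i : ℤ)) := by
      rw [le_div_iff₀ hpos, mul_comm]
      exact ((mul_le_mul_of_nonneg_right hside (Int.cast_nonneg (hJ.2 i).1)).trans
        (hJ.2 i).2.le)
    exact Int.cast_le.1 (hk.trans (Int.le_ceil _))
  exact ((finite_Icc _ _).prod (Finite.pi fun i => finite_Icc _ _)).image _ |>.subset hsub

lemma toSet_eq_pi (J : DCube dd) :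
    J.toSet α D = pi univ fun i => Ico (J.side α D i * J.k i) (J.side α D i * (J.k i + 1)) := by
  ext x
  simp [DCube.toSet, side]

lemma volume_toSet (hD : 0 < D) (J : DCube dd) :
    volume (J.toSet α D) = ENNReal.ofReal (∏ i, J.side α D i) := by
  rw [toSet_eq_pi, volume_pi_pi, ENNReal.ofReal_prod_of_nonneg fun i _ => (side_pos hD J i).le]
  congr 1
  ext i
  rw [Real.volume_Ico]
  ring_nf

lemma measurableSet_toSet (J : DCube dd) : MeasurableSet (J.toSet α D) := by
  rw [toSet_eq_pi]
  exact MeasurableSet.univ_pi fun i => measurableSet_Ico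

lemma volume_toSet_pos (hD : 0 < D) (J : DCube dd) : 0 < volume (J.toSet α D) := by
  rw [volume_toSet hD]
  exact ENNReal.ofReal_pos.2 (Finset.prod_pos fun i _ => side_pos hD J i)

lemma volume_toSet_ne_top (hD : 0 < D) (J : DCube dd) : volume (J.toSet α D) ≠ ⊤ := by
  rw [volume_toSet hD]
  exact ENNReal.ofReal_ne_top

lemma exists_eq_biUnion (hD : 0 < D) {s : ℤ} (hs : s ≤ 0) {E : Set (Fin dd → ℝ)}
    (hE : E ⊆ unitCube dd)
    (hsat : ∀ J : DCube dd, J.s = s → ∀ x ∈ J.toSet α D, x ∈ E → J.toSet α D ⊆ E) :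
    ∃ 𝒞 : Set (DCube dd), (∀ J ∈ 𝒞, J.valid α D) ∧
      (∀ J ∈ 𝒞, ∀ J' ∈ 𝒞, J ≠ J' → J.toSet α D ∩ J'.toSet α D = ∅) ∧
      E = ⋃ J ∈ 𝒞, J.toSet α D := by
  refine ⟨{J | J.s = s ∧ J.valid α D ∧ J.toSet α D ⊆ E}, fun J hJ => hJ.2.1,
    fun J hJ J' hJ' hne => ?_, ?_⟩
  · by_contra h
    obtain ⟨x, hx, hx'⟩ := nonempty_iff_ne_empty.2 h
    exact hne (eq_of_mem_of_mem hD (hJ.1.trans hJ'.1.symm) hx hx')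
  · refine subset_antisymm (fun x hx => ?_) (iUnion₂_subset fun J hJ => hJ.2.2)
    obtain ⟨J, hJs, hJ, hxJ⟩ := exists_mem_toSet hD hs (hE hx)
    exact mem_biUnion ⟨hJs, hJ, hsat J hJs x hxJ hx⟩ hxJ

/-- The volume of a cube is strictly increasing in its scale. -/
lemma s_le_of_toSet_subset (hD : 1 < D) (hα : ∃ i, 0 < α i) {J J' : DCube dd}
    (h : J.toSet α D ⊆ J'.toSet α D) : J.s ≤ J'.s := by
  by_contra! hlt
  obtain ⟨i₀, hi₀⟩ := hα
  have hD' : (1 : ℝ) < D := Nat.one_lt_cast.2 hD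
  have hprod : ∏ i, J'.side α D i < ∏ i, J.side α D i := by
    refine Finset.prod_lt_prod (fun i _ => side_pos hD.le J' i)
      (fun i _ => zpow_le_zpow_right₀ hD'.le
        (mul_le_mul_of_nonneg_right hlt.le (Int.natCast_nonneg _)))
      ⟨i₀, Finset.mem_univ _, zpow_lt_zpow_right₀ hD' (mul_lt_mul_of_pos_right hlt ?_)⟩
    exact_mod_cast hi₀
  have hvol := measure_mono (μ := volume) h
  rw [volume_toSet hD.le, volume_toSet hD.le,
    ENNReal.ofReal_le_ofReal_iff (Finset.prod_nonneg fun i _ => (side_pos hD.le J' i).le)] at hvol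
  exact hprod.not_ge hvol

end DCube

lemma volume_unitCube {dd : ℕ} : volume (unitCube dd) = 1 := by
  have : unitCube dd = pi univ fun _ => Ico (0 : ℝ) 1 := by
    ext x
    simp [unitCube]
  simp [this, volume_pi_pi]

open scoped Finset

lemma Finset.exists_split_of_add_lt_card {ι β : Type*} [LinearOrder β] (P : Finset ι)
    (sc : ι → β) {m M : ℕ} (h : m + M < #P) :
    ∃ q ∈ P, m < #{p ∈ P | sc q ≤ sc p} ∧ M ≤ #{p ∈ P | sc p ≤ sc q} := by
  set C := {q ∈ P | m < #{p ∈ P | sc q ≤ sc p}}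
  have hC : C.Nonempty := by
    obtain ⟨q₀, hq₀, hmin⟩ := P.exists_min_image sc (Finset.card_pos.1 (by omega))
    refine ⟨q₀, Finset.mem_filter.2 ⟨hq₀, ?_⟩⟩
    rw [Finset.filter_true_of_mem fun p hp => hmin p hp]
    omega
  obtain ⟨q, hqC, hqmax⟩ := C.exists_max_image sc hC
  obtain ⟨hqP, hq⟩ := Finset.mem_filter.1 hqC
  have habove : #{p ∈ P | sc q < sc p} ≤ m := by
    rcases Finset.eq_empty_or_nonempty {p ∈ P | sc q < sc p} with hB | hB
    · simp [hB]
    obtain ⟨r, hrB, hrmin⟩ := Finset.exists_min_image _ sc hB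
    obtain ⟨hrP, hqr⟩ := Finset.mem_filter.1 hrB
    have hrC : r ∉ C := fun hrC => (hqmax r hrC).not_gt hqr
    calc #{p ∈ P | sc q < sc p} ≤ #{p ∈ P | sc r ≤ sc p} :=
          Finset.card_le_card fun p hp => Finset.mem_filter.2
            ⟨(Finset.mem_filter.1 hp).1, hrmin p hp⟩
      _ ≤ m := not_lt.1 fun h => hrC (Finset.mem_filter.2 ⟨hrP, h⟩)
  refine ⟨q, hqP, hq, ?_⟩
  have hsplit := Finset.card_filter_add_card_filter_not (s := P) (fun p => sc p ≤ sc q)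
  simp only [not_le] at hsplit
  omega

section JohnNirenberg

open Classical

variable {X ι : Type*} {I : ι → Set X}

def countIn (I : ι → Set X) (𝔉 : Finset ι) (S : Set X) (y : X) : ℕ :=
  #{i ∈ 𝔉 | y ∈ I i ∧ I i ⊆ S}

lemma countIn_mono {𝔉 : Finset ι} {S S' : Set X} (h : S ⊆ S') (y : X) :
    countIn I 𝔉 S y ≤ countIn I 𝔉 S' y :=
  Finset.card_le_card fun i hi => by
    simp only [Finset.mem_filter] at hi ⊢
    exact ⟨hi.1, hi.2.1, hi.2.2.trans h⟩

lemma mem_of_countIn_pos {𝔉 : Finset ι} {S : Set X} {y : X} (h : 0 < countIn I 𝔉 S y) :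
    y ∈ S := by
  obtain ⟨i, hi⟩ := Finset.card_pos.1 h
  obtain ⟨-, hy, hS⟩ := Finset.mem_filter.1 hi
  exact hS hy

lemma countIn_eq_sum_indicator (𝔉 : Finset ι) (S : Set X) (y : X) :
    (countIn I 𝔉 S y : ℝ≥0∞) = ∑ i ∈ 𝔉 with I i ⊆ S, (I i).indicator 1 y := by
  rw [countIn, Finset.card_filter, Finset.sum_filter]
  push_cast
  refine Finset.sum_congr rfl fun i _ => ?_
  by_cases hy : y ∈ I i <;> by_cases hS : I i ⊆ S <;> simp [hy, hS]

lemma mul_measure_le_countIn_le [MeasurableSpace X] {μ : Measure X}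
    (hI : ∀ i, MeasurableSet (I i)) (𝔉 : Finset ι) (S : Set X) (M : ℕ) :
    M * μ {y | M ≤ countIn I 𝔉 S y} ≤ ∑ i ∈ 𝔉 with I i ⊆ S, μ (I i) := by
  have hf : Measurable fun y => ∑ i ∈ 𝔉 with I i ⊆ S, (I i).indicator (1 : X → ℝ≥0∞) y :=
    Finset.measurable_sum _ fun i _ => measurable_one.indicator (hI i)
  calc (M : ℝ≥0∞) * μ {y | M ≤ countIn I 𝔉 S y}
      = M * μ {y | (M : ℝ≥0∞) ≤ ∑ i ∈ 𝔉 with I i ⊆ S, (I i).indicator 1 y} := by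
        simp only [← countIn_eq_sum_indicator, Nat.cast_le]
    _ ≤ ∫⁻ y, ∑ i ∈ 𝔉 with I i ⊆ S, (I i).indicator 1 y ∂μ :=
        mul_meas_ge_le_lintegral₀ hf.aemeasurable _
    _ = ∑ i ∈ 𝔉 with I i ⊆ S, μ (I i) := by
        rw [lintegral_finsetSum _ fun i _ => measurable_one.indicator (hI i)]
        simp_rw [lintegral_indicator_one (hI _)]

variable {β : Type*} [LinearOrder β] {sc : ι → β}

/-- Of the sets through `x` inside `S`, ordered by `sc`, the `(t+1)`-st from the top lies in
`{t < countIn I 𝔉 S}` and contains the remaining `M` or more. -/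
lemma setOf_add_lt_countIn_subset (hnest : ∀ i j x, x ∈ I i → x ∈ I j → sc i ≤ sc j → I i ⊆ I j)
    (𝔉 : Finset ι) (S : Set X) (t M : ℕ) :
    {y | t + M < countIn I 𝔉 S y} ⊆
      ⋃ j ∈ {j | j ∈ 𝔉 ∧ I j ⊆ {y | t < countIn I 𝔉 S y}}, {y | M ≤ countIn I 𝔉 (I j) y} := by
  intro x hx
  obtain ⟨q, hqP, habove, hbelow⟩ :=
    Finset.exists_split_of_add_lt_card {i ∈ 𝔉 | x ∈ I i ∧ I i ⊆ S} sc hx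
  obtain ⟨hq𝔉, hxq, -⟩ := Finset.mem_filter.1 hqP
  refine mem_biUnion ⟨hq𝔉, fun y hy => habove.trans_le (Finset.card_le_card fun p hp => ?_)⟩
    (hbelow.trans (Finset.card_le_card fun p hp => ?_))
  · obtain ⟨hpP, hqp⟩ := Finset.mem_filter.1 hp
    obtain ⟨hp𝔉, hxp, hpS⟩ := Finset.mem_filter.1 hpP
    exact Finset.mem_filter.2 ⟨hp𝔉, hnest q p x hxq hxp hqp hy, hpS⟩
  · obtain ⟨hpP, hpq⟩ := Finset.mem_filter.1 hp
    obtain ⟨hp𝔉, hxp, -⟩ := Finset.mem_filter.1 hpP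
    exact Finset.mem_filter.2 ⟨hp𝔉, hxp, hnest p q x hxp hxq hpq⟩

variable [MeasurableSpace X] {μ : Measure X} {𝔉 : Finset ι} {A : ℕ}

lemma measure_two_mul_le_countIn_le (hI : ∀ i, MeasurableSet (I i)) (hA : 0 < A)
    (hpack : ∀ j ∈ 𝔉, ∑ i ∈ 𝔉 with I i ⊆ I j, μ (I i) ≤ A * μ (I j)) {j : ι} (hj : j ∈ 𝔉) :
    μ {y | 2 * A ≤ countIn I 𝔉 (I j) y} ≤ 2⁻¹ * μ (I j) := by
  have h := (mul_measure_le_countIn_le hI 𝔉 (I j) (2 * A)).trans (hpack j hj)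
  rw [Nat.cast_mul, Nat.cast_ofNat, mul_comm (2 : ℝ≥0∞), mul_assoc,
    ENNReal.mul_le_mul_iff_right (by exact_mod_cast hA.ne') (ENNReal.natCast_ne_top A)] at h
  calc μ {y | 2 * A ≤ countIn I 𝔉 (I j) y}
      = 2⁻¹ * (2 * μ {y | 2 * A ≤ countIn I 𝔉 (I j) y}) := by
        rw [← mul_assoc, ENNReal.inv_mul_cancel two_ne_zero ENNReal.ofNat_ne_top, one_mul]
    _ ≤ 2⁻¹ * μ (I j) := by gcongr

/-- Cover the higher level set by the maximal sets of the family inside the lower one: they are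
disjoint, and Chebyshev's inequality on each gains the factor `2⁻¹`. -/
lemma measure_add_lt_countIn_le (hI : ∀ i, MeasurableSet (I i))
    (hnest : ∀ i j x, x ∈ I i → x ∈ I j → sc i ≤ sc j → I i ⊆ I j) (hA : 0 < A)
    (hpack : ∀ j ∈ 𝔉, ∑ i ∈ 𝔉 with I i ⊆ I j, μ (I i) ≤ A * μ (I j)) (S : Set X) (t : ℕ) :
    μ {y | t + 2 * A < countIn I 𝔉 S y} ≤ 2⁻¹ * μ {y | t < countIn I 𝔉 S y} := by
  set V := {y | t < countIn I 𝔉 S y}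
  set 𝒮 : Set (Set X) := I '' {j | j ∈ 𝔉 ∧ I j ⊆ V}
  set 𝓜 := {B | Maximal (· ∈ 𝒮) B}
  have h𝒮 : 𝒮.Finite := (𝔉.finite_toSet.subset fun j hj => hj.1).image I
  have h𝓜 : 𝓜.Countable := (h𝒮.subset fun B hB => hB.prop).countable
  have hcover : {y | t + 2 * A < countIn I 𝔉 S y} ⊆
      ⋃ B ∈ 𝓜, {y | 2 * A ≤ countIn I 𝔉 B y} := by
    intro x hx
    obtain ⟨j, hj, hxj⟩ := mem_iUnion₂.1 (setOf_add_lt_countIn_subset hnest 𝔉 S t (2 * A) hx)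
    obtain ⟨B, hjB, hB⟩ := h𝒮.exists_le_maximal (mem_image_of_mem I hj)
    exact mem_biUnion hB (le_trans hxj (countIn_mono hjB x))
  have hdisj : 𝓜.PairwiseDisjoint id := by
    rintro B hB B' hB' hne
    obtain ⟨i, -, rfl⟩ := hB.prop
    obtain ⟨j, -, rfl⟩ := hB'.prop
    refine Set.disjoint_left.2 fun x hxi hxj => ?_
    rcases le_total (sc i) (sc j) with h | h
    · exact hne (hB.eq_of_subset hB'.prop (hnest i j x hxi hxj h))
    · exact hne (hB'.eq_of_subset hB.prop (hnest j i x hxj hxi h)).symm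
  calc μ {y | t + 2 * A < countIn I 𝔉 S y}
      ≤ μ (⋃ B ∈ 𝓜, {y | 2 * A ≤ countIn I 𝔉 B y}) := measure_mono hcover
    _ ≤ ∑' B : 𝓜, μ {y | 2 * A ≤ countIn I 𝔉 B y} := measure_biUnion_le μ h𝓜 _
    _ ≤ ∑' B : 𝓜, 2⁻¹ * μ B := by
        refine ENNReal.tsum_le_tsum fun ⟨B, ⟨⟨j, hj, hjB⟩, _⟩⟩ => ?_
        subst hjB
        exact measure_two_mul_le_countIn_le hI hA hpack hj.1
    _ = 2⁻¹ * μ (⋃ B ∈ 𝓜, B) := by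
        rw [ENNReal.tsum_mul_left]
        refine congrArg _ (measure_biUnion h𝓜 hdisj ?_).symm
        rintro B ⟨⟨j, -, rfl⟩, -⟩
        exact hI j
    _ ≤ 2⁻¹ * μ V := by
        refine mul_le_mul_right (measure_mono (iUnion₂_subset fun B hB => ?_)) _
        obtain ⟨j, hj, rfl⟩ := hB.prop
        exact hj.2

/-- John–Nirenberg inequality for a Carleson-packed family of nested sets. -/
theorem measure_lt_countIn_le (hI : ∀ i, MeasurableSet (I i))
    (hnest : ∀ i j x, x ∈ I i → x ∈ I j → sc i ≤ sc j → I i ⊆ I j) (hA : 0 < A)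
    (hpack : ∀ j ∈ 𝔉, ∑ i ∈ 𝔉 with I i ⊆ I j, μ (I i) ≤ A * μ (I j)) (S : Set X) (k : ℕ) :
    μ {y | k * (2 * A) < countIn I 𝔉 S y} ≤ 2⁻¹ ^ k * μ S := by
  induction k with
  | zero =>
    simp only [zero_mul, pow_zero, one_mul]
    exact measure_mono fun y hy => mem_of_countIn_pos hy
  | succ k ih =>
    calc μ {y | (k + 1) * (2 * A) < countIn I 𝔉 S y}
        = μ {y | k * (2 * A) + 2 * A < countIn I 𝔉 S y} := by rw [add_one_mul]
      _ ≤ 2⁻¹ * μ {y | k * (2 * A) < countIn I 𝔉 S y} :=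
          measure_add_lt_countIn_le hI hnest hA hpack S _
      _ ≤ 2⁻¹ * (2⁻¹ ^ k * μ S) := by gcongr
      _ = 2⁻¹ ^ (k + 1) * μ S := by rw [pow_succ', mul_assoc]

end JohnNirenberg

section Tiles

variable {dd d : ℕ} {α : Fin dd → ℕ} {D : ℕ} {s_min s_max : ℤ} {𝔓 : Set (Tile dd)}
  {Qx : (Fin dd → ℝ) → MvPolynomial (Fin dd) ℝ} {E E' : Set (Fin dd → ℝ)} {n : ℕ}

lemma Tile.le_trans {p q r : Tile dd} (hpq : Tile.le α D p q) (hqr : Tile.le α D q r) :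
    Tile.le α D p r :=
  ⟨hpq.1.trans hqr.1, hqr.2.trans hpq.2⟩

lemma denseTiles_anti (h : E ⊆ E') : denseTiles α D Qx 𝔓 E' n ⊆ denseTiles α D Qx 𝔓 E n :=
  fun _ ⟨⟨hp, hgood⟩, hdense⟩ => ⟨⟨hp, fun hE => hgood (hE.trans h)⟩, hdense⟩

lemma disjoint_Q_of_mem_maxTiles (hD : 0 < D) (hP : GoodCollection α D d s_min s_max 𝔓)
    {p q : Tile dd} (hp : p ∈ MaxTiles α D Qx 𝔓 E n) (hq : q ∈ MaxTiles α D Qx 𝔓 E n)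
    (hpq : p ≠ q) {x : Fin dd → ℝ} (hxp : x ∈ p.I.toSet α D) (hxq : x ∈ q.I.toSet α D) :
    Disjoint p.Q q.Q := by
  wlog hs : p.I.s ≤ q.I.s generalizing p q
  · exact (this hq hp hpq.symm hxq hxp (le_of_not_ge hs)).symm
  have hsub := DCube.toSet_subset_of_mem hD hs hxp hxq
  rcases hP.2.2.2 p hp.1.1.1 q hq.1.1.1 hsub with h | h
  · exact Set.disjoint_iff_inter_eq_empty.2 h
  · exact absurd (hp.2 q hq.1 ⟨hsub, h⟩) hpq

lemma disjoint_Ebar_of_mem_maxTiles (hD : 0 < D) (hP : GoodCollection α D d s_min s_max 𝔓)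
    {p q : Tile dd} (hp : p ∈ MaxTiles α D Qx 𝔓 E n) (hq : q ∈ MaxTiles α D Qx 𝔓 E n)
    (hpq : p ≠ q) : Disjoint (Ebar α D Qx p) (Ebar α D Qx q) :=
  Set.disjoint_left.2 fun _ hxp hxq =>
    Set.disjoint_left.1 (disjoint_Q_of_mem_maxTiles hD hP hp hq hpq hxp.1 hxq.1) hxp.2 hxq.2

/-- Carleson packing: each cube is at most `2 ^ n` times its set `Ebar`, and these are disjoint. -/
lemma sum_volume_le_of_forall_mem_maxTiles (hD : 0 < D)
    (hP : GoodCollection α D d s_min s_max 𝔓) (hmeas : ∀ p ∈ 𝔓, MeasurableSet (Ebar α D Qx p))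
    {T : Finset (Tile dd)} (hT : ∀ p ∈ T, p ∈ MaxTiles α D Qx 𝔓 E n)
    {B : Set (Fin dd → ℝ)} (hB : ∀ p ∈ T, p.I.toSet α D ⊆ B) :
    ∑ p ∈ T, volume (p.I.toSet α D) ≤ 2 ^ n * volume B :=
  calc ∑ p ∈ T, volume (p.I.toSet α D)
      ≤ ∑ p ∈ T, 2 ^ n * volume (Ebar α D Qx p) := Finset.sum_le_sum fun p hp => (hT p hp).1.2
    _ = 2 ^ n * volume (⋃ p ∈ T, Ebar α D Qx p) := by
        rw [← Finset.mul_sum, measure_biUnion_finset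
          (fun p hp q hq hpq => disjoint_Ebar_of_mem_maxTiles hD hP (hT p hp) (hT q hq) hpq)
          fun p hp => hmeas p (hT p hp).1.1.1]
    _ ≤ 2 ^ n * volume B := by
        gcongr
        exact iUnion₂_subset fun p hp x hx => hB p hp hx.1

lemma card_le_of_forall_mem_maxTiles_toSet_eq (hD : 0 < D)
    (hP : GoodCollection α D d s_min s_max 𝔓) (hmeas : ∀ p ∈ 𝔓, MeasurableSet (Ebar α D Qx p))
    (J : DCube dd) {T : Finset (Tile dd)}
    (hT : ∀ p ∈ T, p ∈ MaxTiles α D Qx 𝔓 E n ∧ p.I.toSet α D = J.toSet α D) : #T ≤ 2 ^ n := by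
  have h := sum_volume_le_of_forall_mem_maxTiles hD hP hmeas (fun p hp => (hT p hp).1)
    fun p hp => (hT p hp).2.le
  rw [Finset.sum_congr rfl fun p hp => congrArg volume (hT p hp).2, Finset.sum_const,
    nsmul_eq_mul, ENNReal.mul_le_mul_iff_left (DCube.volume_toSet_pos hD J).ne'
      (DCube.volume_toSet_ne_top hD J)] at h
  exact_mod_cast h

lemma card_le_two_pow_of_isEmpty [IsEmpty (Fin dd)] (hD : 0 < D)
    (hP : GoodCollection α D d s_min s_max 𝔓) (hmeas : ∀ p ∈ 𝔓, MeasurableSet (Ebar α D Qx p))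
    {T : Finset (Tile dd)} (hT : ∀ p ∈ T, p ∈ MaxTiles α D Qx 𝔓 E n) : #T ≤ 2 ^ n :=
  card_le_of_forall_mem_maxTiles_toSet_eq hD hP hmeas ⟨0, 0⟩ fun p hp =>
    ⟨hT p hp, by ext; simp [DCube.toSet]⟩

lemma finite_maxTiles (hD : 0 < D) (hP : GoodCollection α D d s_min s_max 𝔓)
    (hmeas : ∀ p ∈ 𝔓, MeasurableSet (Ebar α D Qx p)) : (MaxTiles α D Qx 𝔓 E n).Finite := by
  have hcover : MaxTiles α D Qx 𝔓 E n ⊆ ⋃ J ∈ {J : DCube dd | J.valid α D ∧ s_min ≤ J.s},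
      {p ∈ MaxTiles α D Qx 𝔓 E n | p.I = J} := fun p hp =>
    mem_biUnion ⟨(hP.1 p hp.1.1.1).1, (hP.1 p hp.1.1.1).2.1⟩ ⟨hp, rfl⟩
  refine ((DCube.finite_setOf_valid hD s_min).biUnion fun J _ => ?_).subset hcover
  by_contra hinf
  obtain ⟨T, hT, hcard⟩ := Set.Infinite.exists_subset_card_eq hinf (2 ^ n + 1)
  have := card_le_of_forall_mem_maxTiles_toSet_eq hD hP hmeas J fun p hp =>
    ⟨(hT hp).1, congrArg _ (hT hp).2⟩
  omega

/-- Take a dense tile above `p` of largest scale: a dense tile above it has the same cube, and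
tiles on one cube have disjoint `Q`. -/
lemma exists_mem_maxTiles_le (hD : 1 < D) (hα : ∃ i, 0 < α i)
    (hP : GoodCollection α D d s_min s_max 𝔓) {p : Tile dd}
    (hp : p ∈ denseTiles α D Qx 𝔓 E n) : ∃ q ∈ MaxTiles α D Qx 𝔓 E n, Tile.le α D p q := by
  obtain ⟨s, ⟨q, hq, hpq, rfl⟩, hmax⟩ := Int.exists_greatest_of_bdd
    (P := fun s => ∃ q ∈ denseTiles α D Qx 𝔓 E n, Tile.le α D p q ∧ q.I.s = s)
    ⟨s_max, by rintro _ ⟨q, hq, -, rfl⟩; exact (hP.1 q hq.1.1).2.2.1⟩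
    ⟨_, p, hp, ⟨subset_rfl, subset_rfl⟩, rfl⟩
  refine ⟨q, ⟨hq, fun r hr hqr => ?_⟩, hpq⟩
  have hs : q.I.s = r.I.s := le_antisymm (DCube.s_le_of_toSet_subset hD hα hqr.1)
    (hmax _ ⟨r, hr, Tile.le_trans hpq hqr, rfl⟩)
  have hI : q.I = r.I := DCube.eq_of_mem_of_mem hD.le hs (DCube.corner_mem hD.le q.I)
    (hqr.1 (DCube.corner_mem hD.le q.I))
  by_contra hne
  have hc : r.c ∈ r.Q := (hP.1 r hr.1.1).2.2.2.1
  exact Set.disjoint_left.1 (Set.disjoint_iff_inter_eq_empty.2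
    (hP.2.2.1 q hq.1.1 r hr.1.1 hI hne)) (hqr.2 hc) hc

/-- Each tile of `F` lies below a maximal dense tile of `𝔐` through `y`, and distinct tiles of
`F` below the same one would share its central polynomial. -/
lemma card_le_countIn (hD : 1 < D) (hα : ∃ i, 0 < α i)
    (hP : GoodCollection α D d s_min s_max 𝔓) {𝔐 : Finset (Tile dd)}
    (h𝔐 : (𝔐 : Set (Tile dd)) = MaxTiles α D Qx 𝔓 ∅ n) {F : Finset (Tile dd)}
    {y : Fin dd → ℝ} (hF : ∀ p ∈ F, p ∈ MaxTiles α D Qx 𝔓 E n ∧ y ∈ p.I.toSet α D) :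
    #F ≤ countIn (fun p : Tile dd => p.I.toSet α D) 𝔐 (unitCube dd) y := by
  classical
  have hlift : ∀ p ∈ F, ∃ q ∈ MaxTiles α D Qx 𝔓 ∅ n, Tile.le α D p q := fun p hp =>
    exists_mem_maxTiles_le hD hα hP (denseTiles_anti (empty_subset E) (hF p hp).1.1)
  choose! f hfM hfle using hlift
  refine Finset.card_le_card_of_injOn f (fun p hp => ?_) fun p hp p' hp' hpp' => ?_
  · have hq := hfM p hp
    refine Finset.mem_filter.2 ⟨?_, (hfle p hp).1 (hF p hp).2,
      DCube.toSet_subset_unitCube hD.le (hP.1 _ hq.1.1.1).1⟩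
    rw [← Finset.mem_coe, h𝔐]
    exact hq
  · by_contra hne
    have hc : (f p).c ∈ (f p).Q := (hP.1 _ (hfM p hp).1.1.1).2.2.2.1
    refine Set.disjoint_left.1 (disjoint_Q_of_mem_maxTiles hD.le hP (hF p hp).1 (hF p' hp').1 hne
      (hF p hp).2 (hF p' hp').2) ((hfle p hp).2 hc) ((hfle p' hp').2 ?_)
    rwa [← hpp']

end Tiles

section Threshold

/-- Chosen so that `2⁻¹ ^ threshold lam n ≤ (lam * (n + 1))⁻²`, which is summable over `n`. -/
def threshold (lam : ℝ) (n : ℕ) : ℕ := ⌈Real.logb 2 ((lam * (n + 1)) ^ 2)⌉₊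

variable {lam : ℝ} {n : ℕ}

lemma sq_le_two_pow_threshold (hlam : 0 < lam) :
    (lam * (n + 1)) ^ 2 ≤ 2 ^ threshold lam n := by
  have ht : 0 < (lam * (n + 1)) ^ 2 := by positivity
  calc (lam * (n + 1)) ^ 2 = (2 : ℝ) ^ Real.logb 2 ((lam * (n + 1)) ^ 2) :=
        (Real.rpow_logb two_pos (by norm_num) ht).symm
    _ ≤ (2 : ℝ) ^ (threshold lam n : ℝ) :=
        Real.rpow_le_rpow_of_exponent_le one_le_two (Nat.le_ceil _)
    _ = 2 ^ threshold lam n := Real.rpow_natCast _ _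

lemma two_inv_pow_threshold_le (hlam : 0 < lam) :
    (2⁻¹ : ℝ≥0∞) ^ threshold lam n ≤ ENNReal.ofReal (1 / (lam * (n + 1)) ^ 2) := by
  rw [← ENNReal.inv_pow, one_div, ENNReal.ofReal_inv_of_pos (by positivity)]
  refine ENNReal.inv_le_inv.2 ?_
  calc ENNReal.ofReal ((lam * (n + 1)) ^ 2) ≤ ENNReal.ofReal (2 ^ threshold lam n) :=
        ENNReal.ofReal_le_ofReal (sq_le_two_pow_threshold hlam)
    _ = 2 ^ threshold lam n := by rw [ENNReal.ofReal_pow zero_le_two, ENNReal.ofReal_ofNat]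

lemma tsum_ofReal_inv_sq_le (hlam : 0 < lam) :
    ∑' n : ℕ, ENNReal.ofReal (1 / (lam * (n + 1)) ^ 2) ≤ ENNReal.ofReal (2 / lam ^ 2) := by
  have hsum : HasSum (fun n : ℕ => 1 / (lam * (n + 1)) ^ 2) ((lam ^ 2)⁻¹ * (Real.pi ^ 2 / 6)) := by
    have h := (hasSum_nat_add_iff' 1).2 hasSum_zeta_two
    simp at h
    have hfun : (fun n : ℕ => 1 / (lam * (n + 1)) ^ 2) =
        fun n : ℕ => (lam ^ 2)⁻¹ * (((n : ℝ) + 1) ^ 2)⁻¹ := by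
      ext n
      rw [one_div, mul_pow, mul_inv]
    rw [hfun]
    exact h.mul_left _
  rw [← ENNReal.ofReal_tsum_of_nonneg (fun n => by positivity) hsum.summable, hsum.tsum_eq]
  refine ENNReal.ofReal_le_ofReal ?_
  rw [div_eq_mul_inv 2, mul_comm 2]
  gcongr
  nlinarith [Real.pi_lt_d2, Real.pi_pos]

lemma threshold_pos (hlam : 1 < lam) : 0 < threshold lam n := by
  have h : 1 < lam * (n + 1) := hlam.trans_le (le_mul_of_one_le_right (by linarith) (by simp))
  exact Nat.ceil_pos.2 (Real.logb_pos one_lt_two (one_lt_pow₀ h two_ne_zero))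

lemma threshold_mul_le (hlam : Real.exp 1 ≤ lam) (hn : 1 ≤ n) :
    ((threshold lam n * (2 * 2 ^ n) : ℕ) : ℝ) ≤
      28 * 2 ^ n * Real.log (n + 1) * Real.log lam := by
  have hlam0 : 0 < lam := (Real.exp_pos 1).trans_le hlam
  have hL : 1 ≤ Real.log lam := (Real.le_log_iff_exp_le hlam0).2 hlam
  have hlog2 : 1 / 2 < Real.log 2 := by linarith [Real.log_two_gt_d9]
  have hb : Real.log 2 ≤ Real.log (n + 1) :=
    Real.log_le_log two_pos (by norm_cast; omega)
  have hlogb : Real.logb 2 ((lam * (n + 1)) ^ 2) =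
      2 * (Real.log lam + Real.log (n + 1)) / Real.log 2 := by
    rw [Real.logb, Real.log_pow, Real.log_mul hlam0.ne' (by positivity)]
    push_cast
    ring
  have hK : (threshold lam n : ℝ) < 4 * (Real.log lam + Real.log (n + 1)) + 1 := by
    refine (Nat.ceil_lt_add_one ?_).trans_le ?_
    · rw [hlogb]
      exact div_nonneg (by linarith) (by linarith)
    · have : 2 * (Real.log lam + Real.log (n + 1)) / Real.log 2 ≤
          4 * (Real.log lam + Real.log (n + 1)) := by
        rw [div_le_iff₀ (by linarith)]
        nlinarith
      rw [hlogb]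
      linarith
  have h2K : 2 * (threshold lam n : ℝ) ≤ 28 * Real.log (n + 1) * Real.log lam := by nlinarith
  push_cast
  nlinarith [pow_pos (two_pos : (0 : ℝ) < 2) n]

end Threshold

section ExceptionalSet

variable {dd d : ℕ} {α : Fin dd → ℕ} {D : ℕ} {s_min s_max : ℤ} {𝔓 : Set (Tile dd)}
  {Qx : (Fin dd → ℝ) → MvPolynomial (Fin dd) ℝ} {𝔐 : ℕ → Finset (Tile dd)} {lam : ℝ} {n : ℕ}

def exceptionalSet (α : Fin dd → ℕ) (D : ℕ) (𝔐 : ℕ → Finset (Tile dd)) (lam : ℝ) :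
    Set (Fin dd → ℝ) :=
  ⋃ n, {y | threshold lam n * (2 * 2 ^ n) <
    countIn (fun p : Tile dd => p.I.toSet α D) (𝔐 n) (unitCube dd) y}

lemma exceptionalSet_subset_unitCube : exceptionalSet α D 𝔐 lam ⊆ unitCube dd :=
  iUnion_subset fun _ _ hy => mem_of_countIn_pos ((Nat.zero_le _).trans_lt hy)

lemma countIn_le_of_mem_toSet (hD : 0 < D) {𝔉 : Finset (Tile dd)} {S : Set (Fin dd → ℝ)}
    {J : DCube dd} (h𝔉 : ∀ p ∈ 𝔉, J.s ≤ p.I.s) {x y : Fin dd → ℝ} (hx : x ∈ J.toSet α D)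
    (hy : y ∈ J.toSet α D) :
    countIn (fun p : Tile dd => p.I.toSet α D) 𝔉 S x ≤
      countIn (fun p : Tile dd => p.I.toSet α D) 𝔉 S y := by
  classical
  refine Finset.card_le_card fun p hp => ?_
  obtain ⟨hp𝔉, hxp, hpS⟩ := Finset.mem_filter.1 hp
  exact Finset.mem_filter.2 ⟨hp𝔉, DCube.toSet_subset_of_mem hD (h𝔉 p hp𝔉) hx hxp hy, hpS⟩

lemma exists_eq_biUnion_exceptionalSet (hD : 0 < D) (hs : s_min ≤ 0)
    (h𝔐 : ∀ n, ∀ p ∈ 𝔐 n, s_min ≤ p.I.s) :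
    ∃ 𝒞 : Set (DCube dd), (∀ J ∈ 𝒞, J.valid α D) ∧
      (∀ J ∈ 𝒞, ∀ J' ∈ 𝒞, J ≠ J' → J.toSet α D ∩ J'.toSet α D = ∅) ∧
      exceptionalSet α D 𝔐 lam = ⋃ J ∈ 𝒞, J.toSet α D := by
  refine DCube.exists_eq_biUnion hD hs exceptionalSet_subset_unitCube fun J hJ x hx hxE y hy => ?_
  obtain ⟨n, hn⟩ := mem_iUnion.1 hxE
  exact mem_iUnion.2
    ⟨n, hn.trans_le (countIn_le_of_mem_toSet hD (fun p hp => hJ ▸ h𝔐 n p hp) hx hy)⟩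

lemma volume_exceptionalSet_le (hD : 0 < D) (hP : GoodCollection α D d s_min s_max 𝔓)
    (hmeas : ∀ p ∈ 𝔓, MeasurableSet (Ebar α D Qx p))
    (h𝔐 : ∀ n, ∀ p ∈ 𝔐 n, p ∈ MaxTiles α D Qx 𝔓 ∅ n) (hlam : 0 < lam) :
    volume (exceptionalSet α D 𝔐 lam) ≤ ENNReal.ofReal (2 / lam ^ 2) := by
  classical
  have hlevel : ∀ n, volume {y | threshold lam n * (2 * 2 ^ n) <
      countIn (fun p : Tile dd => p.I.toSet α D) (𝔐 n) (unitCube dd) y} ≤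
        2⁻¹ ^ threshold lam n := fun n => by
    refine (measure_lt_countIn_le (sc := fun p : Tile dd => p.I.s)
      (fun p => DCube.measurableSet_toSet p.I)
      (fun p q x hxp hxq h => DCube.toSet_subset_of_mem hD h hxp hxq) (pow_pos two_pos n)
      (fun j hj => ?_) (unitCube dd) (threshold lam n)).trans_eq (by rw [volume_unitCube, mul_one])
    push_cast
    exact sum_volume_le_of_forall_mem_maxTiles hD hP hmeas
      (fun p hp => h𝔐 n p (Finset.mem_filter.1 hp).1) fun p hp => (Finset.mem_filter.1 hp).2
  calc volume (exceptionalSet α D 𝔐 lam)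
      ≤ ∑' n, volume {y | threshold lam n * (2 * 2 ^ n) <
          countIn (fun p : Tile dd => p.I.toSet α D) (𝔐 n) (unitCube dd) y} :=
        measure_iUnion_le _
    _ ≤ ∑' n : ℕ, ENNReal.ofReal (1 / (lam * (n + 1)) ^ 2) :=
        ENNReal.tsum_le_tsum fun n => (hlevel n).trans (two_inv_pow_threshold_le hlam)
    _ ≤ ENNReal.ofReal (2 / lam ^ 2) := tsum_ofReal_inv_sq_le hlam

lemma card_le_of_forall_mem_maxTiles_exceptionalSet (hD : 1 < D) (hα : ∃ i, 0 < α i)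
    (hP : GoodCollection α D d s_min s_max 𝔓)
    (h𝔐 : ∀ n, (𝔐 n : Set (Tile dd)) = MaxTiles α D Qx 𝔓 ∅ n) {F : Finset (Tile dd)}
    {x : Fin dd → ℝ}
    (hF : ∀ p ∈ F, p ∈ MaxTiles α D Qx 𝔓 (exceptionalSet α D 𝔐 lam) n ∧ x ∈ p.I.toSet α D) :
    #F ≤ threshold lam n * (2 * 2 ^ n) := by
  rcases F.eq_empty_or_nonempty with rfl | hne
  · simp
  obtain ⟨p₀, hp₀, hmin⟩ := F.exists_min_image (fun p => p.I.s) hne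
  obtain ⟨y, hy, hyE⟩ := not_subset.1 (hF p₀ hp₀).1.1.1.2
  have hyF : ∀ p ∈ F, p ∈ MaxTiles α D Qx 𝔓 (exceptionalSet α D 𝔐 lam) n ∧
      y ∈ p.I.toSet α D := fun p hp =>
    ⟨(hF p hp).1, DCube.toSet_subset_of_mem hD.le (hmin p hp) (hF p₀ hp₀).2 (hF p hp).2 hy⟩
  exact (card_le_countIn hD hα hP (h𝔐 n) hyF).trans (not_lt.1 fun h => hyE (mem_iUnion.2 ⟨n, h⟩))

end ExceptionalSet

theorem statement9_general (dd d : ℕ) (α : Fin dd → ℕ) (hα : ∀ i, 0 < α i) :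
    ∃ C : ℝ, 0 < C ∧
      ∀ (D : ℕ), 2 ≤ D → (∃ k : ℕ, D = 2 ^ k) →
      ∀ (s_min s_max : ℤ), s_min ≤ s_max → s_max ≤ 0 →
      ∀ 𝔓 : Set (Tile dd), GoodCollection α D d s_min s_max 𝔓 →
      ∀ Qx : (Fin dd → ℝ) → MvPolynomial (Fin dd) ℝ,
        (∀ x, Qx x ∈ QSpace dd d) → (Set.range Qx).Finite →
        (∀ p ∈ 𝔓, MeasurableSet (Ebar α D Qx p)) →
      ∀ lam : ℝ, 10 * Real.exp 1 < lam →
      ∃ E₁ : Set (Fin dd → ℝ), E₁ ⊆ unitCube dd ∧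
        (∃ 𝒞 : Set (DCube dd), (∀ J ∈ 𝒞, J.valid α D) ∧
          (∀ J ∈ 𝒞, ∀ J' ∈ 𝒞, J ≠ J' → J.toSet α D ∩ J'.toSet α D = ∅) ∧
          E₁ = ⋃ J ∈ 𝒞, J.toSet α D) ∧
        volume E₁ ≤ ENNReal.ofReal (C / lam ^ 2) ∧
        (∀ n : ℕ, 1 ≤ n → ∀ x : Fin dd → ℝ, ∀ F : Finset (Tile dd),
          (∀ p ∈ F, p ∈ MaxTiles α D Qx 𝔓 E₁ n ∧ x ∈ p.I.toSet α D) →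
          (F.card : ℝ) ≤ C * 2 ^ n * Real.log (n + 1) * Real.log lam) := by
  refine ⟨28, by norm_num, fun D hD _ s_min s_max hs hs0 𝔓 hP Qx _ _ hmeas lam hlam => ?_⟩
  have hD0 : 0 < D := by omega
  have hlam1 : Real.exp 1 ≤ lam := by linarith [Real.exp_pos 1]
  have hlam0 : 1 < lam := by linarith [Real.add_one_le_exp 1]
  set 𝔐 : ℕ → Finset (Tile dd) := fun n => (finite_maxTiles (E := ∅) (n := n) hD0 hP hmeas).toFinset
  have h𝔐 : ∀ n, (𝔐 n : Set (Tile dd)) = MaxTiles α D Qx 𝔓 ∅ n := fun n =>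
    Set.Finite.coe_toFinset _
  have hmem : ∀ n, ∀ p ∈ 𝔐 n, p ∈ MaxTiles α D Qx 𝔓 ∅ n := fun n p hp =>
    (Set.Finite.mem_toFinset _).1 hp
  refine ⟨exceptionalSet α D 𝔐 lam, exceptionalSet_subset_unitCube,
    exists_eq_biUnion_exceptionalSet hD0 (hs.trans hs0) fun n p hp =>
      (hP.1 p (hmem n p hp).1.1.1).2.1,
    (volume_exceptionalSet_le hD0 hP hmeas hmem (by linarith)).trans
      (ENNReal.ofReal_le_ofReal (by gcongr; norm_num)), fun n hn x F hF => ?_⟩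
  have hcard : #F ≤ threshold lam n * (2 * 2 ^ n) := by
    rcases isEmpty_or_nonempty (Fin dd) with hdd | ⟨⟨i⟩⟩
    · exact (card_le_two_pow_of_isEmpty hD0 hP hmeas fun p hp => (hF p hp).1).trans
        ((Nat.le_mul_of_pos_left _ two_pos).trans (Nat.le_mul_of_pos_left _ (threshold_pos hlam0)))
    · exact card_le_of_forall_mem_maxTiles_exceptionalSet hD ⟨i, hα i⟩ hP h𝔐 hF
  exact (Nat.cast_le.2 hcard).trans (threshold_mul_le hlam1 hn)

theorem statement9 (dd d : ℕ) (α : Fin dd → ℕ) (hα : ∀ i, 0 < α i) (hmono : Monotone α) :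
    ∃ C : ℝ, 0 < C ∧
      ∀ (D : ℕ), 2 ≤ D → (∃ k : ℕ, D = 2 ^ k) →
      ∀ (s_min s_max : ℤ), s_min ≤ s_max → s_max ≤ 0 →
      ∀ 𝔓 : Set (Tile dd), GoodCollection α D d s_min s_max 𝔓 →
      ∀ Qx : (Fin dd → ℝ) → MvPolynomial (Fin dd) ℝ,
        (∀ x, Qx x ∈ QSpace dd d) → (Set.range Qx).Finite →
        (∀ p ∈ 𝔓, MeasurableSet (Ebar α D Qx p)) →
      ∀ lam : ℝ, 10 * Real.exp 1 < lam →
      ∃ E₁ : Set (Fin dd → ℝ), E₁ ⊆ unitCube dd ∧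
        (∃ 𝒞 : Set (DCube dd), (∀ J ∈ 𝒞, J.valid α D) ∧
          (∀ J ∈ 𝒞, ∀ J' ∈ 𝒞, J ≠ J' → J.toSet α D ∩ J'.toSet α D = ∅) ∧
          E₁ = ⋃ J ∈ 𝒞, J.toSet α D) ∧
        volume E₁ ≤ ENNReal.ofReal (C / lam ^ 2) ∧
        (∀ n : ℕ, 1 ≤ n → ∀ x : Fin dd → ℝ, ∀ F : Finset (Tile dd),
          (∀ p ∈ F, p ∈ MaxTiles α D Qx 𝔓 E₁ n ∧ x ∈ p.I.toSet α D) →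
          (F.card : ℝ) ≤ C * 2 ^ n * Real.log (n + 1) * Real.log lam) :=
  statement9_general dd d α hα

end
end
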